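/- arXiv:math/0104024 — 4 statements merged into one kernel-verified Lean document; each statement's English description precedes it below -/
import Mathlib

section
/- Let φ be a continuous flow on a metric space M, and let A ⊆ M be compact. For B ⊆ A define P(B) = {x ∈ A : ∃ y ∈ B, ∃ t ≥ 0 such that φ_{[0,t]}(y) ⊆ A and x = φ_t(y)}. If B is a compact subset of A that either contains A⁻ or is disjoint from A⁺, then P(B) is compact. -/
open Filter Topology

/-- If B ⊆ A is compact and either contains A⁻ or is disjoint from A⁺,
then P(B) = {x ∈ A : ∃ y ∈ B, t ≥ 0, φ_{[0,t]}(y) ⊆ A, x = φ_t(y)} is compact. -/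
theorem stmt_1 {M : Type*} [MetricSpace M]
    (φ : M × ℝ → M) (hφ : Continuous φ)
    (h0 : ∀ x, φ (x, 0) = x)
    (hadd : ∀ x s t, φ (φ (x, t), s) = φ (x, s + t))
    (A B : Set M) (hA : IsCompact A) (hB : IsCompact B) (hBA : B ⊆ A)
    (hcase :
      {x ∈ A | ∀ t : ℝ, t ≤ 0 → φ (x, t) ∈ A} ⊆ B ∨
      B ∩ {x ∈ A | ∀ t : ℝ, 0 ≤ t → φ (x, t) ∈ A} = ∅) :
    IsCompact {x ∈ A | ∃ y ∈ B, ∃ t : ℝ, 0 ≤ t ∧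
      (∀ s ∈ Set.Icc (0 : ℝ) t, φ (y, s) ∈ A) ∧ x = φ (y, t)} := by
  have hAc : IsClosed A := hA.isClosed
  apply hA.of_isClosed_subset _ (fun x hx => hx.1)
  rw [← isSeqClosed_iff_isClosed]
  intro xs x hxs hx
  simp only [Set.mem_setOf_eq] at hxs
  choose hxA y hyB t ht hseg hxe using hxs
  have hxA' : x ∈ A := hAc.mem_of_tendsto hx (Eventually.of_forall hxA)
  by_cases hbdd : ∃ C, ∀ n, t n ≤ C
  · -- bounded times: extract a convergent subsequence of (y n, t n)
    obtain ⟨C, hC⟩ := hbdd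
    have hcpt : IsCompact (B ×ˢ Set.Icc (0 : ℝ) C) := hB.prod isCompact_Icc
    obtain ⟨⟨y0, τ⟩, hmem, σ, hσ, hconv⟩ :=
      hcpt.tendsto_subseq (x := fun n => (y n, t n))
        (fun n => ⟨hyB n, ht n, hC n⟩)
    have hy0 : y0 ∈ B := hmem.1
    have hτ : (0 : ℝ) ≤ τ := hmem.2.1
    have hxlim : Tendsto (fun k => xs (σ k)) atTop (𝓝 x) := hx.comp hσ.tendsto_atTop
    have hflim : Tendsto (fun k => φ (y (σ k), t (σ k))) atTop (𝓝 (φ (y0, τ))) :=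
      (hφ.tendsto _).comp hconv
    have hxeq : x = φ (y0, τ) := by
      refine tendsto_nhds_unique hxlim ?_
      have : (fun k => xs (σ k)) = fun k => φ (y (σ k), t (σ k)) := by
        funext k; exact hxe (σ k)
      rw [this]; exact hflim
    have hylim : Tendsto (fun k => y (σ k)) atTop (𝓝 y0) :=
      (continuous_fst.tendsto _).comp hconv
    have htlim : Tendsto (fun k => t (σ k)) atTop (𝓝 τ) :=
      (continuous_snd.tendsto _).comp hconv
    refine ⟨hxA', y0, hy0, τ, hτ, ?_, hxeq⟩
    intro s hs
    have hmin : Tendsto (fun k => φ (y (σ k), min s (t (σ k)))) atTop (𝓝 (φ (y0, s))) := by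
      have h1 : Tendsto (fun k => min s (t (σ k))) atTop (𝓝 (min s τ)) :=
        (tendsto_const_nhds : Tendsto (fun _ : ℕ => s) atTop (𝓝 s)).min htlim
      rw [min_eq_left hs.2] at h1
      exact (hφ.tendsto _).comp (hylim.prodMk_nhds h1)
    refine hAc.mem_of_tendsto hmin (Eventually.of_forall fun k => ?_)
    exact hseg (σ k) _ ⟨le_min hs.1 (ht (σ k)), min_le_right _ _⟩
  · -- unbounded times
    push_neg at hbdd
    have hfreq : ∀ N : ℕ, ∃ᶠ k in atTop, (N : ℝ) < t k := by
      intro N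
      rw [frequently_atTop]
      intro a
      obtain ⟨C0, hC0⟩ : BddAbove (t '' Set.Iio a) := ((Set.finite_Iio a).image t).bddAbove
      obtain ⟨k, hk⟩ := hbdd (max (N : ℝ) C0)
      refine ⟨k, ?_, lt_of_le_of_lt (le_max_left _ _) hk⟩
      by_contra h
      push_neg at h
      exact absurd (hC0 ⟨k, h, rfl⟩) (not_le.mpr (lt_of_le_of_lt (le_max_right _ _) hk))
    obtain ⟨g, hg, hgt⟩ := Filter.extraction_forall_of_frequently hfreq
    have htg : Tendsto (fun n => t (g n)) atTop atTop :=
      tendsto_atTop_mono (fun n => (hgt n).le) tendsto_natCast_atTop_atTop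
    obtain ⟨y0, hy0B, σ, hσ, hyconv⟩ := hB.tendsto_subseq (x := fun n => y (g n))
      (fun n => hyB (g n))
    set m : ℕ → ℕ := fun k => g (σ k) with hm
    have htm : Tendsto (fun k => t (m k)) atTop atTop := htg.comp hσ.tendsto_atTop
    have hxm : Tendsto (fun k => xs (m k)) atTop (𝓝 x) :=
      hx.comp ((hg.comp hσ).tendsto_atTop)
    rcases hcase with hL | hR
    · -- x is in A⁻ ⊆ B, so x = φ(x,0) witnesses membership
      have hxB : x ∈ B := by
        apply hL
        refine ⟨hxA', fun s hs => ?_⟩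
        have hev : ∀ᶠ k in atTop, φ (xs (m k), s) ∈ A := by
          filter_upwards [htm.eventually_ge_atTop (-s)] with k hk
          rw [hxe (m k), hadd]
          exact hseg (m k) _ ⟨by linarith, by linarith⟩
        have hlim : Tendsto (fun k => φ (xs (m k), s)) atTop (𝓝 (φ (x, s))) :=
          (hφ.tendsto _).comp (hxm.prodMk_nhds tendsto_const_nhds)
        exact hAc.mem_of_tendsto hlim hev
      refine ⟨hxA', x, hxB, 0, le_refl 0, fun s hs => ?_, (h0 x).symm⟩
      have hs0 : s = 0 := le_antisymm hs.2 hs.1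
      rw [hs0, h0]; exact hxA'
    · -- y0 would be in B ∩ A⁺ = ∅, contradiction
      exfalso
      have hy0A : y0 ∈ {x ∈ A | ∀ t : ℝ, 0 ≤ t → φ (x, t) ∈ A} := by
        refine ⟨hBA hy0B, fun s hs => ?_⟩
        have hev : ∀ᶠ k in atTop, φ (y (m k), s) ∈ A := by
          filter_upwards [htm.eventually_ge_atTop s] with k hk
          exact hseg (m k) s ⟨hs, hk⟩
        have hlim : Tendsto (fun k => φ (y (m k), s)) atTop (𝓝 (φ (y0, s))) :=
          (hφ.tendsto _).comp (hyconv.prodMk_nhds tendsto_const_nhds)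
        exact hAc.mem_of_tendsto hlim hev
      exact Set.eq_empty_iff_forall_notMem.mp hR y0 ⟨hy0B, hy0A⟩
end

section
/- Let φ be a continuous flow on a metric space, A a compact set, and C ⊆ A a compact set disjoint from A⁻. Then there exists t* ≥ 0 such that for every y ∈ C, the backward orbit segment φ_{[-t*,0]}(y) is not contained in A. -/
/-- If C ⊆ A is compact and disjoint from A⁻, then there is t* ≥ 0
such that for every y ∈ C the backward segment φ_{[-t*,0]}(y) is not contained in A. -/
theorem stmt_3 {M : Type*} [MetricSpace M]
    (φ : M × ℝ → M) (hφ : Continuous φ)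
    (h0 : ∀ x, φ (x, 0) = x)
    (hadd : ∀ x s t, φ (φ (x, t), s) = φ (x, s + t))
    (A C : Set M) (hA : IsCompact A) (hC : IsCompact C) (hCA : C ⊆ A)
    (hdisj : C ∩ {x ∈ A | ∀ t : ℝ, t ≤ 0 → φ (x, t) ∈ A} = ∅) :
    ∃ tstar : ℝ, 0 ≤ tstar ∧
      ∀ y ∈ C, ¬ (∀ s ∈ Set.Icc (-tstar) (0 : ℝ), φ (y, s) ∈ A) := by
  -- For each y ∈ C there is an escape time
  have hesc : ∀ y : C, ∃ t : ℝ, t ≤ 0 ∧ φ ((y : M), t) ∉ A := by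
    rintro ⟨y, hy⟩
    by_contra h
    push_neg at h
    have : y ∈ C ∩ {x ∈ A | ∀ t : ℝ, t ≤ 0 → φ (x, t) ∈ A} :=
      ⟨hy, hCA hy, fun t ht => h t ht⟩
    rw [hdisj] at this
    exact this
  choose t ht htA using hesc
  -- open sets
  set U : C → Set M := fun y => {x | φ (x, t y) ∉ A} with hU
  have hUopen : ∀ y, IsOpen (U y) := fun y =>
    (hA.isClosed.preimage (hφ.comp (continuous_id.prodMk continuous_const))).isOpen_compl
  have hcov : C ⊆ ⋃ y : C, U y := fun x hx =>
    Set.mem_iUnion.mpr ⟨⟨x, hx⟩, htA ⟨x, hx⟩⟩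
  obtain ⟨s, hs⟩ := hC.elim_finite_subcover U hUopen hcov
  rcases s.eq_empty_or_nonempty with rfl | hsne
  · -- C must be empty
    refine ⟨0, le_refl 0, fun y hy hall => ?_⟩
    have := hs hy
    simp at this
  · refine ⟨s.sup' hsne (fun i => -(t i)) ⊔ 0, le_sup_right, fun y hy hall => ?_⟩
    obtain ⟨i, hi, hyi⟩ := Set.mem_iUnion₂.mp (hs hy)
    apply hyi
    apply hall
    constructor
    · have h1 : -(t i) ≤ s.sup' hsne (fun i => -(t i)) :=
        Finset.le_sup' (fun i => -(t i)) hi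
      have h2 : s.sup' hsne (fun i => -(t i)) ≤ s.sup' hsne (fun i => -(t i)) ⊔ 0 :=
        le_sup_left
      linarith
    · exact ht i
end

section
/- Let φ be a continuous flow on a metric space, A compact, B ⊆ A compact with B disjoint from A⁺. Suppose x_n = φ_{t_n}(y_n) with y_n ∈ B, t_n ≥ 0, φ_{[0,t_n]}(y_n) ⊆ A, x_n → x, and y_n → y ∈ B. If t_n → ∞, then y ∈ A⁺ (contradiction-yielding claim: such a limit forces y ∈ A⁺). -/
open Filter Topology

/-- If x_n = φ_{t_n}(y_n), y_n ∈ B ⊆ A with B compact and disjoint from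
A⁺, φ_{[0,t_n]}(y_n) ⊆ A, x_n → x, y_n → y ∈ B and t_n → ∞, then y ∈ A⁺. -/
theorem stmt_4 {M : Type*} [MetricSpace M]
    (φ : M × ℝ → M) (hφ : Continuous φ)
    (h0 : ∀ x, φ (x, 0) = x)
    (hadd : ∀ x s t, φ (φ (x, t), s) = φ (x, s + t))
    (A B : Set M) (hA : IsCompact A) (hB : IsCompact B) (hBA : B ⊆ A)
    (hdisj : B ∩ {x ∈ A | ∀ t : ℝ, 0 ≤ t → φ (x, t) ∈ A} = ∅)
    (y : ℕ → M) (t : ℕ → ℝ) (x ylim : M)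
    (hy : ∀ n, y n ∈ B) (ht : ∀ n, 0 ≤ t n)
    (hseg : ∀ n, ∀ s ∈ Set.Icc (0 : ℝ) (t n), φ (y n, s) ∈ A)
    (hxconv : Tendsto (fun n => φ (y n, t n)) atTop (𝓝 x))
    (hyconv : Tendsto y atTop (𝓝 ylim)) (hylim : ylim ∈ B)
    (htinf : Tendsto t atTop atTop) :
    ylim ∈ {x ∈ A | ∀ t : ℝ, 0 ≤ t → φ (x, t) ∈ A} := by
  refine ⟨hBA hylim, fun s hs => ?_⟩
  have hconv : Tendsto (fun n => φ (y n, s)) atTop (𝓝 (φ (ylim, s))) :=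
    (hφ.comp (Continuous.prodMk_left s : Continuous fun m : M => (m, s))).continuousAt.tendsto.comp hyconv
  refine hA.isClosed.mem_of_tendsto hconv ?_
  filter_upwards [htinf.eventually_ge_atTop s] with n hn
  exact hseg n s ⟨hs, hn⟩
end

section
/- Let A be a compact isolating neighborhood for an isolated invariant set S = Inv A of a continuous flow φ on a metric space, and let K₁, K₂ ⊆ A be compact sets such that (i) for every x ∈ K₁ ∩ A⁺ and every t ≥ 0, φ_t(x) ∉ ∂A, and (ii) K₂ ∩ A⁺ = ∅. Then there exists an index pair (N, L) for S with K₁ ⊆ N ⊆ A and K₂ ⊆ L. -/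
open Filter Topology Metric Set
set_option linter.unusedSectionVars false
set_option linter.unusedVariables false
set_option maxHeartbeats 1000000

namespace Stmt19


variable {M : Type*} [MetricSpace M]

/-- Forward saturation of `B` inside `A`. -/
def P (φ : M × ℝ → M) (A B : Set M) : Set M :=
  {y | ∃ x ∈ B, ∃ t : ℝ, 0 ≤ t ∧ (∀ s, 0 ≤ s → s ≤ t → φ (x, s) ∈ A) ∧ y = φ (x, t)}

/-- Points of `A` whose forward orbit stays in `A`. -/
def Ap (φ : M × ℝ → M) (A : Set M) : Set M := {x ∈ A | ∀ t : ℝ, 0 ≤ t → φ (x, t) ∈ A}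

variable {φ : M × ℝ → M} {A B C : Set M}

theorem subset_P (h0 : ∀ x, φ (x, 0) = x) (hBA : B ⊆ A) : B ⊆ P φ A B := by
  intro x hx
  exact ⟨x, hx, 0, le_refl 0, fun s hs hs' => by
    have : s = 0 := le_antisymm hs' hs
    subst this; rw [h0]; exact hBA hx, (h0 x).symm⟩

theorem P_subset_A : P φ A B ⊆ A := by
  rintro y ⟨x, hx, t, ht, hseg, rfl⟩
  exact hseg t ht le_rfl

theorem P_mono (h : B ⊆ C) : P φ A B ⊆ P φ A C := by
  rintro y ⟨x, hx, t, ht, hseg, rfl⟩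
  exact ⟨x, h hx, t, ht, hseg, rfl⟩

theorem P_pinv (hadd : ∀ x s t, φ (φ (x, t), s) = φ (x, s + t))
    {y u} (hy : y ∈ P φ A B) (hu : 0 ≤ u)
    (hseg : ∀ s, 0 ≤ s → s ≤ u → φ (y, s) ∈ A) : φ (y, u) ∈ P φ A B := by
  obtain ⟨x, hx, t, ht, hsg, rfl⟩ := hy
  refine ⟨x, hx, u + t, by linarith, fun s hs hs' => ?_, by rw [hadd]⟩
  rcases le_or_gt s t with h | h
  · exact hsg s hs h
  · have : φ (x, s) = φ (φ (x, t), s - t) := by rw [hadd]; ring_nf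
    rw [this]
    exact hseg (s - t) (by linarith) (by linarith)

theorem P_idem (hadd : ∀ x s t, φ (φ (x, t), s) = φ (x, s + t)) :
    P φ A (P φ A B) ⊆ P φ A B := by
  rintro y ⟨x, hx, t, ht, hseg, rfl⟩
  exact P_pinv hadd hx ht hseg

theorem Ap_closed (hφ : Continuous φ) (hAc : IsClosed A) : IsClosed (Ap φ A) := by
  have : Ap φ A = A ∩ ⋂ t ∈ Ici (0:ℝ), (fun x => φ (x, t)) ⁻¹' A := by
    ext x; simp [Ap, Set.mem_iInter]
  rw [this]
  exact hAc.inter (isClosed_biInter fun t _ =>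
    hAc.preimage (hφ.comp (continuous_id.prodMk continuous_const)))

theorem mem_Ap_of_seg (hadd : ∀ x s t, φ (φ (x, t), s) = φ (x, s + t))
    {x t} (hxA : x ∈ A) (ht : 0 ≤ t) (hseg : ∀ s, 0 ≤ s → s ≤ t → φ (x, s) ∈ A)
    (h : φ (x, t) ∈ Ap φ A) : x ∈ Ap φ A := by
  refine ⟨hxA, fun s hs => ?_⟩
  rcases le_or_gt s t with h' | h'
  · exact hseg s hs h'
  · have : φ (x, s) = φ (φ (x, t), s - t) := by rw [hadd]; ring_nf
    rw [this]
    exact h.2 (s - t) (by linarith)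

theorem P_Ap_disj (hadd : ∀ x s t, φ (φ (x, t), s) = φ (x, s + t))
    (hCA : C ⊆ A) (h : C ∩ Ap φ A = ∅) : P φ A C ∩ Ap φ A = ∅ := by
  ext y
  simp only [Set.mem_inter_iff, Set.mem_empty_iff_false, iff_false, not_and]
  rintro ⟨x, hx, t, ht, hseg, rfl⟩ hy
  have : x ∈ C ∩ Ap φ A := ⟨hx, mem_Ap_of_seg hadd (hCA hx) ht hseg hy⟩
  rw [h] at this; exact this





/-- Bounded exit time for a compact set disjoint from `Ap`. -/
theorem exit_bound (hφ : Continuous φ) (hAc : IsClosed A) (hC : IsCompact C)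
    (hCA : C ⊆ A) (hdisj : C ∩ Ap φ A = ∅) :
    ∃ T : ℝ, 0 ≤ T ∧ ∀ x ∈ C, ∃ r, 0 ≤ r ∧ r ≤ T ∧ φ (x, r) ∉ A := by
  by_contra h
  push_neg at h
  have h' : ∀ n : ℕ, ∃ x ∈ C, ∀ r, 0 ≤ r → r ≤ (n : ℝ) → φ (x, r) ∈ A := by
    intro n
    obtain ⟨x, hx, hx2⟩ := h n (Nat.cast_nonneg n)
    exact ⟨x, hx, fun r hr hr' => hx2 r hr hr'⟩
  choose u hu hseg using h'
  obtain ⟨x, hxC, ψ, hψm, hψt⟩ := hC.tendsto_subseq hu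
  have hxAp : x ∈ Ap φ A := by
    refine ⟨hCA hxC, fun r hr => ?_⟩
    have hcont : Tendsto (fun n => φ (u (ψ n), r)) atTop (𝓝 (φ (x, r))) :=
      ((hφ.comp (continuous_id.prodMk continuous_const)).tendsto x).comp hψt
    refine hAc.mem_of_tendsto hcont ?_
    have hev : ∀ᶠ n : ℕ in atTop, r ≤ (ψ n : ℝ) := by
      have : ∀ᶠ n : ℕ in atTop, r ≤ (n : ℝ) := by
        obtain ⟨m, hm⟩ := exists_nat_ge r
        filter_upwards [eventually_ge_atTop m] with n hn
        exact hm.trans (by exact_mod_cast hn)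
      exact hψm.tendsto_atTop.eventually this
    filter_upwards [hev] with n hn
    exact hseg (ψ n) r hr hn
  have : x ∈ C ∩ Ap φ A := ⟨hxC, hxAp⟩
  rw [hdisj] at this; exact this

/-- A limit of points `φ (x n, t n)` with seeds in a compact `C`, bounded times, and
segments in `A`, lies in `P φ A C`. -/
theorem mem_P_of_seq (hφ : Continuous φ) (hAc : IsClosed A) (hC : IsCompact C)
    {T : ℝ} {y : M} (x : ℕ → M) (t : ℕ → ℝ) (hx : ∀ n, x n ∈ C)
    (ht : ∀ n, t n ∈ Set.Icc 0 T)
    (hseg : ∀ n, ∀ s, 0 ≤ s → s ≤ t n → φ (x n, s) ∈ A)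
    (hy : Tendsto (fun n => φ (x n, t n)) atTop (𝓝 y)) : y ∈ P φ A C := by
  obtain ⟨τ, hτ, ψ, hψm, hψt⟩ := (isCompact_Icc (a := (0:ℝ)) (b := T)).tendsto_subseq ht
  obtain ⟨x', hx'C, ψ₂, hψ₂m, hψ₂t⟩ := hC.tendsto_subseq (fun n => hx (ψ n))
  have htt : Tendsto (fun n => t (ψ (ψ₂ n))) atTop (𝓝 τ) := hψt.comp hψ₂m.tendsto_atTop
  have hpair : Tendsto (fun n => φ (x (ψ (ψ₂ n)), t (ψ (ψ₂ n)))) atTop (𝓝 (φ (x', τ))) :=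
    (hφ.tendsto _).comp (hψ₂t.prodMk_nhds htt)
  have hyy : Tendsto (fun n => φ (x (ψ (ψ₂ n)), t (ψ (ψ₂ n)))) atTop (𝓝 y) :=
    hy.comp (hψm.comp hψ₂m).tendsto_atTop
  have hyeq : y = φ (x', τ) := tendsto_nhds_unique hyy hpair
  refine ⟨x', hx'C, τ, hτ.1, fun s hs hs' => ?_, hyeq⟩
  have hmin : Tendsto (fun n => φ (x (ψ (ψ₂ n)), min s (t (ψ (ψ₂ n)))))
      atTop (𝓝 (φ (x', min s τ))) :=
    (hφ.tendsto _).comp (hψ₂t.prodMk_nhds (tendsto_const_nhds.min htt))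
  have hmem : ∀ n, φ (x (ψ (ψ₂ n)), min s (t (ψ (ψ₂ n)))) ∈ A := fun n =>
    hseg _ _ (le_min hs (ht _).1) (min_le_right _ _)
  have : φ (x', min s τ) ∈ A := hAc.mem_of_tendsto hmin (Eventually.of_forall hmem)
  rwa [min_eq_left hs'] at this

/-- Dichotomy for limit points of `P φ A C`. -/
theorem closure_P_cases (hφ : Continuous φ)
    (hadd : ∀ x s t, φ (φ (x, t), s) = φ (x, s + t))
    (hAc : IsClosed A) (hC : IsCompact C) {y : M} (hy : y ∈ closure (P φ A C)) :
    y ∈ P φ A C ∨ (y ∈ A ∧ ∀ s : ℝ, 0 ≤ s → φ (y, -s) ∈ A) := by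
  obtain ⟨u, hu, hul⟩ := mem_closure_iff_seq_limit.1 hy
  choose x hx t ht hseg hrep using hu
  by_cases hb : ∃ T : ℝ, ∃ᶠ n in atTop, t n ≤ T
  · left
    obtain ⟨T, hT⟩ := hb
    obtain ⟨ψ, hψm, hψ⟩ := extraction_of_frequently_atTop hT
    refine mem_P_of_seq hφ hAc hC (fun n => x (ψ n)) (fun n => t (ψ n))
      (fun n => hx _) (fun n => ⟨ht _, hψ n⟩) (fun n => hseg _) ?_
    have : (fun n => φ (x (ψ n), t (ψ n))) = u ∘ ψ := by
      funext n; rw [Function.comp_apply, ← hrep (ψ n)]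
    rw [this]
    exact hul.comp hψm.tendsto_atTop
  · right
    push_neg at hb
    have hb' : ∀ T : ℝ, ∀ᶠ n in atTop, T < t n := by
      intro T
      have := hb T
      filter_upwards [this] with n hn
      exact hn
    have hyA : y ∈ A := by
      refine hAc.mem_of_tendsto hul (Eventually.of_forall fun n => ?_)
      rw [hrep n]; exact hseg n (t n) (ht n) le_rfl
    refine ⟨hyA, fun s hs => ?_⟩
    have hcont : Tendsto (fun n => φ (u n, -s)) atTop (𝓝 (φ (y, -s))) :=
      ((hφ.comp (continuous_id.prodMk continuous_const)).tendsto y).comp hul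
    refine hAc.mem_of_tendsto hcont ?_
    filter_upwards [hb' s] with n hn
    rw [hrep n, hadd]
    exact hseg n (-s + t n) (by linarith) (by linarith)





/-- If the whole backward orbit of `y` stays in the compact set `A`, then the backward
orbit accumulates on the maximal invariant set, hence eventually enters any open set
containing it. -/
theorem back_orbit_meets (hφ : Continuous φ)
    (hadd : ∀ x s t, φ (φ (x, t), s) = φ (x, s + t))
    (hA : IsCompact A) {y : M}
    (hback : ∀ s : ℝ, 0 ≤ s → φ (y, -s) ∈ A)
    {U : Set M} (hU : IsOpen U) (hSU : {x ∈ A | ∀ t : ℝ, φ (x, t) ∈ A} ⊆ U) :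
    ∃ k : ℝ, 0 ≤ k ∧ φ (y, -k) ∈ U := by
  have hz : ∀ n : ℕ, φ (y, -(n : ℝ)) ∈ A := fun n => hback n (Nat.cast_nonneg n)
  obtain ⟨z, hzA, ψ, hψm, hψt⟩ := hA.tendsto_subseq hz
  have hzS : z ∈ {x ∈ A | ∀ t : ℝ, φ (x, t) ∈ A} := by
    refine ⟨hzA, fun t => ?_⟩
    have hcont : Tendsto (fun n => φ (φ (y, -(ψ n : ℝ)), t)) atTop (𝓝 (φ (z, t))) :=
      ((hφ.comp (continuous_id.prodMk continuous_const)).tendsto z).comp hψt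
    refine (hA.isClosed).mem_of_tendsto hcont ?_
    have hev : ∀ᶠ n : ℕ in atTop, t ≤ (ψ n : ℝ) := by
      have : ∀ᶠ n : ℕ in atTop, t ≤ (n : ℝ) := by
        obtain ⟨m, hm⟩ := exists_nat_ge t
        filter_upwards [eventually_ge_atTop m] with n hn
        exact hm.trans (by exact_mod_cast hn)
      exact hψm.tendsto_atTop.eventually this
    filter_upwards [hev] with n hn
    rw [hadd]
    have : t + -(ψ n : ℝ) = -((ψ n : ℝ) - t) := by ring
    rw [this]
    exact hback _ (by linarith)
  have : ∀ᶠ n : ℕ in atTop, φ (y, -(ψ n : ℝ)) ∈ U :=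
    hψt.eventually (hU.mem_nhds (hSU hzS))
  obtain ⟨n, hn⟩ := this.exists
  exact ⟨ψ n, Nat.cast_nonneg _, hn⟩

/-- The maximal invariant set is disjoint from the closure of the set of
forward-invariant points whose orbit meets the frontier of `A`. -/
theorem S_notin_clZ (hφ : Continuous φ)
    (hadd : ∀ x s t, φ (φ (x, t), s) = φ (x, s + t))
    (hA : IsCompact A)
    (hSint : {x ∈ A | ∀ t : ℝ, φ (x, t) ∈ A} ⊆ interior A)
    {x : M} (hx : x ∈ {x ∈ A | ∀ t : ℝ, φ (x, t) ∈ A}) :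
    x ∉ closure {z ∈ Ap φ A | ∃ t : ℝ, 0 ≤ t ∧ φ (z, t) ∈ frontier A} := by
  intro hcl
  obtain ⟨u, hu, hul⟩ := mem_closure_iff_seq_limit.1 hcl
  have hu1 : ∀ n, u n ∈ Ap φ A := fun n => (hu n).1
  choose t ht hfr using fun n => (hu n).2
  have hfrc : IsCompact (frontier A) :=
    hA.of_isClosed_subset isClosed_frontier hA.isClosed.frontier_subset
  by_cases hb : ∃ T : ℝ, ∃ᶠ n in atTop, t n ≤ T
  · obtain ⟨T, hT⟩ := hb
    obtain ⟨ψ, hψm, hψ⟩ := extraction_of_frequently_atTop hT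
    obtain ⟨τ, hτ, ψ₂, hψ₂m, hψ₂t⟩ :=
      (isCompact_Icc (a := (0:ℝ)) (b := T)).tendsto_subseq
        (fun n => ⟨ht (ψ n), hψ n⟩ : ∀ n, t (ψ n) ∈ Set.Icc 0 T)
    have hx2 : Tendsto (fun n => u (ψ (ψ₂ n))) atTop (𝓝 x) :=
      hul.comp (hψm.comp hψ₂m).tendsto_atTop
    have hpair : Tendsto (fun n => φ (u (ψ (ψ₂ n)), t (ψ (ψ₂ n)))) atTop (𝓝 (φ (x, τ))) :=
      (hφ.tendsto _).comp (hx2.prodMk_nhds (hψ₂t))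
    have hfr2 : φ (x, τ) ∈ frontier A :=
      isClosed_frontier.mem_of_tendsto hpair (Eventually.of_forall fun n => hfr _)
    have hmem : φ (x, τ) ∈ interior A :=
      hSint ⟨hx.2 τ, fun s => by rw [hadd]; exact hx.2 _⟩
    rw [← closure_diff_interior] at hfr2
    exact hfr2.2 hmem
  · push_neg at hb
    have hb' : ∀ T : ℝ, ∀ᶠ n in atTop, T < t n := fun T => by
      filter_upwards [hb T] with n hn
      exact hn
    obtain ⟨w, hwf, ψ, hψm, hψt⟩ :=
      hfrc.tendsto_subseq (fun n => hfr n : ∀ n, φ (u n, t n) ∈ frontier A)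
    have hwS : w ∈ {x ∈ A | ∀ t : ℝ, φ (x, t) ∈ A} := by
      refine ⟨hA.isClosed.frontier_subset hwf, fun s => ?_⟩
      have hcont : Tendsto (fun n => φ (φ (u (ψ n), t (ψ n)), s)) atTop (𝓝 (φ (w, s))) :=
        ((hφ.comp (continuous_id.prodMk continuous_const)).tendsto w).comp hψt
      refine hA.isClosed.mem_of_tendsto hcont ?_
      have hev : ∀ᶠ n : ℕ in atTop, -s < t (ψ n) := hψm.tendsto_atTop.eventually (hb' (-s))
      filter_upwards [hev] with n hn
      rw [hadd]
      exact (hu1 (ψ n)).2 _ (by linarith)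
    have : w ∈ interior A := hSint hwS
    rw [← closure_diff_interior] at hwf
    exact hwf.2 this


end Stmt19
/-- Theorem on existence of index pairs: if A is a compact isolating
neighborhood for S = Inv A, K₁, K₂ ⊆ A compact with (i) no forward orbit from
K₁ ∩ A⁺ meets ∂A, and (ii) K₂ ∩ A⁺ = ∅, then there is an index pair (N, L) for S
with K₁ ⊆ N ⊆ A and K₂ ⊆ L. -/
theorem stmt_19 {M : Type*} [MetricSpace M]
    (φ : M × ℝ → M) (hφ : Continuous φ)
    (h0 : ∀ x, φ (x, 0) = x)
    (hadd : ∀ x s t, φ (φ (x, t), s) = φ (x, s + t))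
    (A : Set M) (hA : IsCompact A)
    (S : Set M) (hS : S = {x ∈ A | ∀ t : ℝ, φ (x, t) ∈ A})
    (hSint : S ⊆ interior A)
    (K₁ K₂ : Set M) (hK₁ : IsCompact K₁) (hK₂ : IsCompact K₂)
    (hK₁A : K₁ ⊆ A) (hK₂A : K₂ ⊆ A)
    (hi : ∀ x ∈ K₁ ∩ {x ∈ A | ∀ t : ℝ, 0 ≤ t → φ (x, t) ∈ A},
      ∀ t : ℝ, 0 ≤ t → φ (x, t) ∉ frontier A)
    (hii : K₂ ∩ {x ∈ A | ∀ t : ℝ, 0 ≤ t → φ (x, t) ∈ A} = ∅) :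
    ∃ N L : Set M, IsCompact N ∧ IsCompact L ∧ L ⊆ N ∧
      K₁ ⊆ N ∧ N ⊆ A ∧ K₂ ⊆ L ∧
      -- (1) Inv(cl(N \ L)) = S ⊆ int(N \ L)
      {x ∈ closure (N \ L) | ∀ t : ℝ, φ (x, t) ∈ closure (N \ L)} = S ∧
      S ⊆ interior (N \ L) ∧
      -- (2) L is an exit set for N
      (∀ x ∈ N, ∀ t : ℝ, 0 < t → φ (x, t) ∉ N →
        ∃ τ ∈ Set.Ico (0 : ℝ) t, φ (x, τ) ∈ L) ∧
      -- (3) L is positively invariant in N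
      (∀ x ∈ L, ∀ t : ℝ, 0 < t → (∀ s ∈ Set.Icc (0 : ℝ) t, φ (x, s) ∈ N) →
        ∀ s ∈ Set.Icc (0 : ℝ) t, φ (x, s) ∈ L) := by
  classical
  subst hS
  have hAc : IsClosed A := hA.isClosed
  set S : Set M := {x ∈ A | ∀ t : ℝ, φ (x, t) ∈ A} with hSdef
  have hScl : IsClosed S := by
    have hSrep : S = A ∩ ⋂ t : ℝ, (fun x => φ (x, t)) ⁻¹' A := by
      ext z; simp [hSdef, Set.mem_iInter]
    rw [hSrep]
    exact hAc.inter (isClosed_iInter fun t =>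
      hAc.preimage (hφ.comp (continuous_id.prodMk continuous_const)))
  have hScomp : IsCompact S := hA.of_isClosed_subset hScl fun x hx => hx.1
  -- the bad set Z, and a compact neighborhood V of S avoiding it
  set Z : Set M := {z ∈ Stmt19.Ap φ A | ∃ t : ℝ, 0 ≤ t ∧ φ (z, t) ∈ frontier A} with hZdef
  have hSZ : ∀ x ∈ S, x ∉ closure Z := fun x hx =>
    Stmt19.S_notin_clZ hφ hadd hA hSint hx
  have hWopen : IsOpen (interior A ∩ (closure Z)ᶜ) :=
    isOpen_interior.inter isClosed_closure.isOpen_compl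
  have hSW : S ⊆ interior A ∩ (closure Z)ᶜ := fun x hx => ⟨hSint hx, hSZ x hx⟩
  obtain ⟨ε, hε, hth⟩ := hScomp.exists_cthickening_subset_open hWopen hSW
  set U : Set M := thickening ε S ∩ interior A with hUdef
  set V : Set M := cthickening ε S ∩ A with hVdef
  have hUopen : IsOpen U := isOpen_thickening.inter isOpen_interior
  have hSU : S ⊆ U := fun x hx => ⟨self_subset_thickening hε _ hx, hSint hx⟩
  have hUV : U ⊆ V := fun x hx =>
    ⟨thickening_subset_cthickening _ _ hx.1, interior_subset hx.2⟩
  have hVA : V ⊆ A := fun x hx => hx.2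
  have hVcomp : IsCompact V := hA.of_isClosed_subset (isClosed_cthickening.inter hAc) hVA
  have hVZ : V ∩ closure Z = ∅ :=
    Set.eq_empty_iff_forall_notMem.mpr fun x ⟨h1, h2⟩ => (hth h1.1).2 h2
  -- the set N
  set B : Set M := K₁ ∪ K₂ ∪ V with hBdef
  have hBA : B ⊆ A := Set.union_subset (Set.union_subset hK₁A hK₂A) hVA
  have hBcomp : IsCompact B := (hK₁.union hK₂).union hVcomp
  set N : Set M := Stmt19.P φ A B with hNdef
  have hK₁N : K₁ ⊆ N := fun x hx => Stmt19.subset_P h0 hBA (Or.inl (Or.inl hx))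
  have hK₂N : K₂ ⊆ N := fun x hx => Stmt19.subset_P h0 hBA (Or.inl (Or.inr hx))
  have hVN : V ⊆ N := fun x hx => Stmt19.subset_P h0 hBA (Or.inr hx)
  have hNA : N ⊆ A := Stmt19.P_subset_A
  have hNcl : IsClosed N := by
    refine closure_subset_iff_isClosed.mp fun y hy => ?_
    rcases Stmt19.closure_P_cases hφ hadd hAc hBcomp hy with h | ⟨hyA, hback⟩
    · exact h
    · obtain ⟨k, hk, hkU⟩ := Stmt19.back_orbit_meets hφ hadd hA hback hUopen hSU
      refine ⟨φ (y, -k), Or.inr (hUV hkU), k, hk, fun s hs hs' => ?_, ?_⟩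
      · rw [hadd]
        have hs'' : s + -k = -(k - s) := by ring
        rw [hs'']
        exact hback _ (by linarith)
      · rw [hadd]
        have hk0 : k + -k = (0 : ℝ) := by ring
        rw [hk0, h0]
  have hNcomp : IsCompact N := hA.of_isClosed_subset hNcl hNA
  -- the set L
  set D : Set M := N ∩ frontier A with hDdef
  have hDcomp : IsCompact D := hNcomp.inter_right isClosed_frontier
  set C : Set M := K₂ ∪ D with hCdef
  have hCA : C ⊆ A := Set.union_subset hK₂A fun x hx => hNA hx.1
  have hCcomp : IsCompact C := hK₂.union hDcomp
  have hCAp : C ∩ Stmt19.Ap φ A = ∅ := by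
    rw [Set.eq_empty_iff_forall_notMem]
    rintro z ⟨hzC, hzAp⟩
    rcases hzC with hz2 | ⟨hzN, hzfr⟩
    · have hmem : z ∈ K₂ ∩ {x ∈ A | ∀ t : ℝ, 0 ≤ t → φ (x, t) ∈ A} := ⟨hz2, hzAp⟩
      rw [hii] at hmem
      exact hmem
    · obtain ⟨b, hbB, t, ht, hseg, hrep⟩ := hzN
      have hbAp : b ∈ Stmt19.Ap φ A :=
        Stmt19.mem_Ap_of_seg hadd (hBA hbB) ht hseg (by rw [← hrep]; exact hzAp)
      have hfrb : φ (b, t) ∈ frontier A := by rw [← hrep]; exact hzfr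
      rcases hbB with (hb1 | hb2) | hbV
      · exact hi b ⟨hb1, hbAp⟩ t ht hfrb
      · have hmem : b ∈ K₂ ∩ {x ∈ A | ∀ t : ℝ, 0 ≤ t → φ (x, t) ∈ A} := ⟨hb2, hbAp⟩
        rw [hii] at hmem
        exact hmem
      · have hbZ : b ∈ Z := ⟨hbAp, t, ht, hfrb⟩
        have hmem : b ∈ V ∩ closure Z := ⟨hbV, subset_closure hbZ⟩
        rw [hVZ] at hmem
        exact hmem
  obtain ⟨T₀, hT₀, hTexit⟩ := Stmt19.exit_bound hφ hAc hCcomp hCA hCAp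
  set L : Set M := Stmt19.P φ A C with hLdef
  have hK₂L : K₂ ⊆ L := fun x hx => Stmt19.subset_P h0 hCA (Or.inl hx)
  have hCN : C ⊆ N := Set.union_subset hK₂N fun x hx => hx.1
  have hLN : L ⊆ N := fun y hy => Stmt19.P_idem hadd (Stmt19.P_mono hCN hy)
  have hLcl : IsClosed L := by
    refine closure_subset_iff_isClosed.mp fun y hy => ?_
    obtain ⟨u, hu, hul⟩ := mem_closure_iff_seq_limit.1 hy
    choose x hx t ht hseg hrep using hu
    have htb : ∀ n, t n ∈ Set.Icc 0 T₀ := by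
      intro n
      refine ⟨ht n, ?_⟩
      by_contra hgt
      push_neg at hgt
      obtain ⟨r, hr0, hrT, hrA⟩ := hTexit (x n) (hx n)
      exact hrA (hseg n r hr0 (by linarith))
    have hfun : (fun n => φ (x n, t n)) = u := by funext n; rw [← hrep n]
    exact Stmt19.mem_P_of_seq hφ hAc hCcomp x t hx htb hseg (hfun ▸ hul)
  have hLA : L ⊆ A := Stmt19.P_subset_A
  have hLcomp : IsCompact L := hA.of_isClosed_subset hLcl hLA
  have hLAp : L ∩ Stmt19.Ap φ A = ∅ := Stmt19.P_Ap_disj hadd hCA hCAp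
  have hSAp : S ⊆ Stmt19.Ap φ A := fun x hx => ⟨hx.1, fun t _ => hx.2 t⟩
  have hSnotL : ∀ x ∈ S, x ∉ L := by
    intro x hx hxL
    have hmem : x ∈ L ∩ Stmt19.Ap φ A := ⟨hxL, hSAp hx⟩
    rw [hLAp] at hmem
    exact hmem
  have hSNL : S ⊆ N \ L := fun x hx => ⟨hVN (hUV (hSU hx)), hSnotL x hx⟩
  refine ⟨N, L, hNcomp, hLcomp, hLN, hK₁N, hNA, hK₂L, ?_, ?_, ?_, ?_⟩
  · -- (1) the invariant part of cl (N \ L) is S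
    ext x
    simp only [Set.mem_setOf_eq]
    constructor
    · rintro ⟨hx1, hx2⟩
      have hclN : closure (N \ L) ⊆ A :=
        (closure_minimal Set.diff_subset hNcl).trans hNA
      exact ⟨hclN hx1, fun t => hclN (hx2 t)⟩
    · intro hx
      have hinv : ∀ t : ℝ, φ (x, t) ∈ S := fun t =>
        ⟨hx.2 t, fun s => by rw [hadd]; exact hx.2 _⟩
      exact ⟨subset_closure (hSNL hx), fun t => subset_closure (hSNL (hinv t))⟩
  · -- S ⊆ interior (N \ L)
    intro x hx
    have hopen : IsOpen (U \ L) := hUopen.sdiff hLcl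
    have hsub : U \ L ⊆ N \ L := fun z hz => ⟨hVN (hUV hz.1), hz.2⟩
    exact interior_maximal hsub hopen ⟨hSU hx, hSnotL x hx⟩
  · -- (2) exit set
    intro x hxN t ht hxt
    set Q : Set ℝ := {s | s ∈ Set.Icc 0 t ∧ ∀ r, 0 ≤ r → r ≤ s → φ (x, r) ∈ A} with hQdef
    have h0Q : (0 : ℝ) ∈ Q := by
      refine ⟨⟨le_rfl, le_of_lt ht⟩, fun r hr hr' => ?_⟩
      have hr0 : r = 0 := le_antisymm hr' hr
      rw [hr0, h0]
      exact hNA hxN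
    have hQbdd : BddAbove Q := ⟨t, fun s hs => hs.1.2⟩
    set τ : ℝ := sSup Q with hτdef
    have hτ0 : 0 ≤ τ := le_csSup hQbdd h0Q
    have hτt : τ ≤ t := csSup_le ⟨0, h0Q⟩ fun s hs => hs.1.2
    have hIco : ∀ s, 0 ≤ s → s < τ → φ (x, s) ∈ A := by
      intro s hs hsτ
      obtain ⟨q, hqQ, hq⟩ := exists_lt_of_lt_csSup ⟨0, h0Q⟩ hsτ
      exact hqQ.2 s hs (le_of_lt hq)
    have hpre : IsClosed {s : ℝ | φ (x, s) ∈ A} :=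
      hAc.preimage (hφ.comp (continuous_const.prodMk continuous_id))
    have hτA : φ (x, τ) ∈ A := by
      rcases eq_or_lt_of_le hτ0 with h | h
      · rw [← h, h0]
        exact hNA hxN
      · have h1 : Set.Ico (0 : ℝ) τ ⊆ {s : ℝ | φ (x, s) ∈ A} := fun s hs =>
          hIco s hs.1 hs.2
        have h2 : τ ∈ closure (Set.Ico (0 : ℝ) τ) := by
          rw [closure_Ico (ne_of_lt h)]
          exact ⟨hτ0, le_rfl⟩
        have h3 := (closure_mono h1) h2
        rwa [hpre.closure_eq] at h3
    have hsegτ : ∀ r, 0 ≤ r → r ≤ τ → φ (x, r) ∈ A := by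
      intro r hr hrτ
      rcases lt_or_eq_of_le hrτ with hlt | heq
      · exact hIco r hr hlt
      · rw [heq]; exact hτA
    have hτlt : τ < t := by
      have hnotall : ∃ r, 0 ≤ r ∧ r ≤ t ∧ φ (x, r) ∉ A := by
        by_contra hc
        push_neg at hc
        exact hxt (Stmt19.P_pinv hadd hxN (le_of_lt ht) fun s hs hs' => hc s hs hs')
      obtain ⟨r0, hr00, hr0t, hr0A⟩ := hnotall
      have hτr0 : τ < r0 := lt_of_not_ge fun hle => hr0A (hsegτ r0 hr00 hle)
      exact lt_of_lt_of_le hτr0 hr0t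
    have hyN : φ (x, τ) ∈ N := Stmt19.P_pinv hadd hxN hτ0 hsegτ
    have hynotint : φ (x, τ) ∉ interior A := by
      intro hint
      have hc : ContinuousAt (fun s : ℝ => φ (x, s)) τ :=
        (hφ.comp (continuous_const.prodMk continuous_id)).continuousAt
      have hev : ∀ᶠ s in 𝓝 τ, φ (x, s) ∈ interior A :=
        hc (isOpen_interior.mem_nhds hint)
      obtain ⟨δ, hδ, hball⟩ := Metric.eventually_nhds_iff.mp hev
      have hs₁Q : min (τ + δ / 2) t ∈ Q := by
        refine ⟨⟨le_min (by linarith) (le_of_lt ht), min_le_right _ _⟩,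
          fun r hr hr' => ?_⟩
        rcases le_or_gt r τ with h' | h'
        · exact hsegτ r hr h'
        · have h1 : r ≤ τ + δ / 2 := hr'.trans (min_le_left _ _)
          have h2 : dist r τ < δ := by
            rw [Real.dist_eq, abs_lt]
            constructor <;> linarith
          exact interior_subset (hball h2)
      have h3 : min (τ + δ / 2) t ≤ τ := le_csSup hQbdd hs₁Q
      have h4 : τ < min (τ + δ / 2) t := lt_min (by linarith) hτlt
      linarith
    have hyfr : φ (x, τ) ∈ frontier A := by
      rw [← closure_diff_interior]
      exact ⟨subset_closure hτA, hynotint⟩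
    exact ⟨τ, ⟨hτ0, hτlt⟩, Stmt19.subset_P h0 hCA (Or.inr ⟨hyN, hyfr⟩)⟩
  · -- (3) positive invariance of L in N
    intro x hxL t ht hN s hs
    exact Stmt19.P_pinv hadd hxL hs.1 fun r hr hr' => hNA (hN r ⟨hr, hr'.trans hs.2⟩)
end
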